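/- Let A ∈ ℝ^{m×n} have columns of unit ℓ2-norm and mutual coherence μ, let k ≥ 2 be an integer with μ < 1/(2k−1), let λ > 0, let b = Ax + z with ‖z‖₂ ≤ λ, and let x^♯ be a minimizer of u ↦ ‖u‖₁ + (1/(2λ))‖b − Au‖₂². Then ‖A(x^♯ − x)‖₂ ≤ (2/(√k·α₁ + 1))·‖x − x_[k]‖₁ + 2(√k·α₁ + 1)·λ, where α₁ = √(1+(k−1)μ)/(1−(k−1)μ). -/

import Mathlib

noncomputable def l2norm {ι : Type*} [Fintype ι] (v : ι → ℝ) : ℝ :=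
  Real.sqrt (∑ i, (v i) ^ 2)

noncomputable def l1norm {ι : Type*} [Fintype ι] (v : ι → ℝ) : ℝ :=
  ∑ i, |v i|

noncomputable def linfnorm {ι : Type*} [Fintype ι] (v : ι → ℝ) : ℝ :=
  ⨆ i, |v i|

/-- The mutual coherence of a matrix: the largest absolute inner product
between two distinct columns. -/
noncomputable def mutualCoherence {m n : ℕ} (A : Matrix (Fin m) (Fin n) ℝ) : ℝ :=
  ⨆ p : {p : Fin n × Fin n // p.1 ≠ p.2}, |∑ r, A r p.1.1 * A r p.1.2|

/-- `restrict v E` agrees with `v` on `E` and vanishes outside of `E`. -/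
def restrict {n : ℕ} (v : Fin n → ℝ) (E : Finset (Fin n)) : Fin n → ℝ :=
  fun i => if i ∈ E then v i else 0

/-- A vector is `k`-sparse if it has at most `k` nonzero entries. -/
def sparse {n : ℕ} (k : ℕ) (v : Fin n → ℝ) : Prop :=
  (Finset.univ.filter fun i => v i ≠ 0).card ≤ k

noncomputable def alpha1 (k : ℕ) (μ : ℝ) : ℝ :=
  Real.sqrt (1 + ((k : ℝ) - 1) * μ) / (1 - ((k : ℝ) - 1) * μ)

noncomputable def alpha2 (k : ℕ) (μ : ℝ) : ℝ :=
  Real.sqrt k * μ / (1 - ((k : ℝ) - 1) * μ)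

noncomputable def fk (k : ℕ) (t : ℝ) : ℝ :=
  (k : ℝ) * t ^ 2 + 3 * Real.sqrt k * t + 3

noncomputable def gk (k : ℕ) (t : ℝ) : ℝ :=
  2 * (k : ℝ) * t ^ 2 + 4 * Real.sqrt k * t + 1

lemma l2norm_nonneg {ι : Type*} [Fintype ι] (v : ι → ℝ) : 0 ≤ l2norm v :=
  Real.sqrt_nonneg _

lemma l2norm_sq {ι : Type*} [Fintype ι] (v : ι → ℝ) : l2norm v ^ 2 = ∑ i, v i ^ 2 :=
  Real.sq_sqrt (by positivity)

lemma l1norm_nonneg {ι : Type*} [Fintype ι] (v : ι → ℝ) : 0 ≤ l1norm v :=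
  Finset.sum_nonneg fun i _ => abs_nonneg _

lemma cs_sum {ι : Type*} [Fintype ι] (u v : ι → ℝ) :
    ∑ i, u i * v i ≤ l2norm u * l2norm v := by
  have h := Finset.sum_mul_sq_le_sq_mul_sq Finset.univ u v
  have h1 : ∑ i, u i * v i ≤ |∑ i, u i * v i| := le_abs_self _
  have h2 : |∑ i, u i * v i| = Real.sqrt ((∑ i, u i * v i)^2) := (Real.sqrt_sq_eq_abs _).symm
  rw [h2] at h1
  refine h1.trans ?_
  rw [l2norm, l2norm, ← Real.sqrt_mul (by positivity)]
  exact Real.sqrt_le_sqrt h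
lemma l2norm_add_le {ι : Type*} [Fintype ι] (u v : ι → ℝ) :
    l2norm (u + v) ≤ l2norm u + l2norm v := by
  have h1 : l2norm (u+v) ^ 2 ≤ (l2norm u + l2norm v)^2 := by
    rw [l2norm_sq]
    have := cs_sum u v
    have hu := l2norm_sq u
    have hv := l2norm_sq v
    have hsum : ∑ i, (u + v) i ^2 = ∑ i, u i ^2 + 2 * ∑ i, u i * v i + ∑ i, v i ^2 := by
      rw [Finset.mul_sum, ← Finset.sum_add_distrib, ← Finset.sum_add_distrib]
      refine Finset.sum_congr rfl fun i _ => by simp [Pi.add_apply]; ring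
    nlinarith [cs_sum u v]
  have h2 : 0 ≤ l2norm u + l2norm v := add_nonneg (l2norm_nonneg u) (l2norm_nonneg v)
  nlinarith [l2norm_nonneg (u+v)]

lemma l1norm_restrict {n : ℕ} (v : Fin n → ℝ) (T : Finset (Fin n)) :
    l1norm (restrict v T) = ∑ i ∈ T, |v i| := by
  rw [l1norm, ← Finset.sum_filter_add_sum_filter_not Finset.univ (· ∈ T)]
  have h1 : ∀ i ∈ Finset.univ.filter (· ∈ T), |restrict v T i| = |v i| := by
    intro i hi; simp only [Finset.mem_filter] at hi; simp [restrict, hi.2]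
  have h2 : ∀ i ∈ Finset.univ.filter (¬ · ∈ T), |restrict v T i| = 0 := by
    intro i hi; simp only [Finset.mem_filter] at hi; simp [restrict, hi.2]
  rw [Finset.sum_congr rfl h1, Finset.sum_congr rfl h2, Finset.sum_const_zero, add_zero]
  congr 1
  ext i; simp

lemma sumsq_restrict {n : ℕ} (v : Fin n → ℝ) (T : Finset (Fin n)) :
    ∑ i, restrict v T i ^ 2 = ∑ i ∈ T, v i ^ 2 := by
  rw [← Finset.sum_filter_add_sum_filter_not Finset.univ (· ∈ T)]
  have h1 : ∀ i ∈ Finset.univ.filter (· ∈ T), restrict v T i ^2 = v i ^2 := by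
    intro i hi; simp only [Finset.mem_filter] at hi; simp [restrict, hi.2]
  have h2 : ∀ i ∈ Finset.univ.filter (¬ · ∈ T), restrict v T i ^2 = 0 := by
    intro i hi; simp only [Finset.mem_filter] at hi; simp [restrict, hi.2]
  rw [Finset.sum_congr rfl h1, Finset.sum_congr rfl h2, Finset.sum_const_zero, add_zero]
  congr 1
  ext i; simp

lemma restrict_add_compl {n : ℕ} (v : Fin n → ℝ) (T : Finset (Fin n)) :
    restrict v T + restrict v Tᶜ = v := by
  funext i; by_cases h : i ∈ T <;> simp [restrict, h, Pi.add_apply]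

-- Cauchy-Schwarz with ones: (∑_{i∈T} |v i|)² ≤ T.card * ∑_{i∈T} v i ^2
lemma l1_sq_le_card {n : ℕ} (v : Fin n → ℝ) (T : Finset (Fin n)) :
    (∑ i ∈ T, |v i|)^2 ≤ (T.card : ℝ) * ∑ i ∈ T, v i ^ 2 := by
  have h := Finset.sum_mul_sq_le_sq_mul_sq T (fun _ => (1:ℝ)) (fun i => |v i|)
  simp only [one_mul, one_pow, Finset.sum_const, nsmul_eq_mul, mul_one, sq_abs] at h
  exact h

-- Gram expansion
lemma gram_expand {m n : ℕ} (A : Matrix (Fin m) (Fin n) ℝ) (u v : Fin n → ℝ) :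
    ∑ r, A.mulVec u r * A.mulVec v r = ∑ i, ∑ j, u i * v j * (∑ r, A r i * A r j) := by
  have step1 : ∀ r, A.mulVec u r * A.mulVec v r = ∑ i, ∑ j, u i * v j * (A r i * A r j) := by
    intro r
    rw [Matrix.mulVec, Matrix.mulVec, dotProduct, dotProduct, Finset.sum_mul_sum]
    exact Finset.sum_congr rfl fun i _ => Finset.sum_congr rfl fun j _ => by ring
  rw [Finset.sum_congr rfl fun r _ => step1 r, Finset.sum_comm]
  refine Finset.sum_congr rfl fun i _ => ?_
  rw [Finset.sum_comm]
  exact Finset.sum_congr rfl fun j _ => (Finset.mul_sum _ _ _).symm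

section coh
variable {m n : ℕ} (A : Matrix (Fin m) (Fin n) ℝ) {μ : ℝ}

lemma gram_diag_bound (hA : ∀ j, ∑ r, A r j ^ 2 = 1) (hμ0 : 0 ≤ μ)
    (hcoh : ∀ i j, i ≠ j → |∑ r, A r i * A r j| ≤ μ) (u : Fin n → ℝ) :
    |∑ r, A.mulVec u r * A.mulVec u r - ∑ i, u i ^ 2|
      ≤ μ * ((∑ i, |u i|)^2 - ∑ i, u i ^ 2) := by
  have hg : ∀ i : Fin n, (∑ r, A r i * A r i) = 1 := by
    intro i; rw [← hA i]; exact Finset.sum_congr rfl fun r _ => (sq (A r i)).symm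
  rw [gram_expand]
  have hsplit : ∀ i : Fin n, ∑ j, u i * u j * (∑ r, A r i * A r j)
      = u i ^ 2 + ∑ j ∈ Finset.univ.erase i, u i * u j * (∑ r, A r i * A r j) := by
    intro i
    rw [← Finset.add_sum_erase Finset.univ _ (Finset.mem_univ i), hg i]
    ring_nf
  rw [Finset.sum_congr rfl fun i _ => hsplit i, Finset.sum_add_distrib, add_sub_cancel_left]
  calc |∑ i, ∑ j ∈ Finset.univ.erase i, u i * u j * (∑ r, A r i * A r j)|
      ≤ ∑ i, |∑ j ∈ Finset.univ.erase i, u i * u j * (∑ r, A r i * A r j)| :=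
        Finset.abs_sum_le_sum_abs _ _
    _ ≤ ∑ i, ∑ j ∈ Finset.univ.erase i, |u i * u j * (∑ r, A r i * A r j)| :=
        Finset.sum_le_sum fun i _ => Finset.abs_sum_le_sum_abs _ _
    _ ≤ ∑ i, ∑ j ∈ Finset.univ.erase i, μ * (|u i| * |u j|) := by
        refine Finset.sum_le_sum fun i _ => Finset.sum_le_sum fun j hj => ?_
        rw [abs_mul, abs_mul]
        have hij : i ≠ j := (Finset.ne_of_mem_erase hj).symm
        calc |u i| * |u j| * |∑ r, A r i * A r j| ≤ |u i| * |u j| * μ :=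
              mul_le_mul_of_nonneg_left (hcoh i j hij) (by positivity)
          _ = μ * (|u i| * |u j|) := by ring
    _ = μ * ((∑ i, |u i|)^2 - ∑ i, u i ^ 2) := by
        have hpull : ∑ i, ∑ j ∈ Finset.univ.erase i, μ * (|u i| * |u j|)
            = μ * ∑ i, ∑ j ∈ Finset.univ.erase i, |u i| * |u j| := by
          rw [Finset.mul_sum]
          exact Finset.sum_congr rfl fun i _ => (Finset.mul_sum _ _ _).symm
        rw [hpull]
        congr 1
        rw [sq, Finset.sum_mul_sum]
        rw [Finset.sum_congr rfl (fun i (_ : i ∈ Finset.univ) =>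
          (Finset.add_sum_erase Finset.univ (fun j => |u i| * |u j|) (Finset.mem_univ i)).symm),
          Finset.sum_add_distrib]
        have : ∀ i : Fin n, |u i| * |u i| = u i ^ 2 := fun i => by rw [← abs_mul, abs_mul_self]; ring
        rw [Finset.sum_congr rfl fun i _ => this i]
        ring

lemma gram_cross_bound (hμ0 : 0 ≤ μ)
    (hcoh : ∀ i j, i ≠ j → |∑ r, A r i * A r j| ≤ μ) (u v : Fin n → ℝ)
    (hdisj : ∀ i, u i = 0 ∨ v i = 0) :
    |∑ r, A.mulVec u r * A.mulVec v r| ≤ μ * ((∑ i, |u i|) * (∑ i, |v i|)) := by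
  rw [gram_expand]
  calc |∑ i, ∑ j, u i * v j * (∑ r, A r i * A r j)|
      ≤ ∑ i, ∑ j, |u i * v j * (∑ r, A r i * A r j)| := by
        refine (Finset.abs_sum_le_sum_abs _ _).trans
          (Finset.sum_le_sum fun i _ => Finset.abs_sum_le_sum_abs _ _)
    _ ≤ ∑ i, ∑ j, μ * (|u i| * |v j|) := by
        refine Finset.sum_le_sum fun i _ => Finset.sum_le_sum fun j _ => ?_
        by_cases hz : u i * v j = 0
        · rw [hz, zero_mul, abs_zero]; positivity
        · have hij : i ≠ j := by
            rintro rfl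
            rcases hdisj i with h | h <;> simp [h] at hz
          rw [abs_mul, abs_mul]
          calc |u i| * |v j| * |∑ r, A r i * A r j| ≤ |u i| * |v j| * μ :=
                mul_le_mul_of_nonneg_left (hcoh i j hij) (by positivity)
            _ = μ * (|u i| * |v j|) := by ring
    _ = μ * ((∑ i, |u i|) * (∑ i, |v i|)) := by
        rw [Finset.sum_mul_sum, Finset.mul_sum]
        exact Finset.sum_congr rfl fun i _ => by rw [Finset.mul_sum]

end coh

lemma key_bound {m n : ℕ} (A : Matrix (Fin m) (Fin n) ℝ)
    (hA : ∀ j, ∑ r, A r j ^ 2 = 1) {μ : ℝ} (hμ0 : 0 ≤ μ)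
    (hcoh : ∀ i j, i ≠ j → |∑ r, A r i * A r j| ≤ μ)
    (k : ℕ) (hδ : ((k:ℝ)-1)*μ < 1) (hk1 : 1 ≤ (k:ℝ))
    (T : Finset (Fin n)) (hT : (T.card : ℝ) ≤ k) (h : Fin n → ℝ) :
    l2norm (restrict h T) ≤ alpha1 k μ * l2norm (A.mulVec h)
      + alpha2 k μ * l1norm (restrict h Tᶜ) := by
  set u := restrict h T with hu
  set v := restrict h Tᶜ with hv
  set δ := ((k:ℝ)-1)*μ with hδdef
  have hδ0 : 0 ≤ δ := mul_nonneg (by linarith) hμ0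
  have h1δ : 0 < 1 - δ := by linarith
  set N := l2norm u with hN
  set H := l2norm (A.mulVec h) with hH
  set P := l2norm (A.mulVec u) with hP
  have hN0 : 0 ≤ N := l2norm_nonneg _
  have hH0 : 0 ≤ H := l2norm_nonneg _
  have hP0 : 0 ≤ P := l2norm_nonneg _
  have hL1u0 : 0 ≤ l1norm u := l1norm_nonneg _
  have hL1v0 : 0 ≤ l1norm v := l1norm_nonneg _
  -- l1 of u squared ≤ k N²
  have hl1sq : (l1norm u)^2 ≤ (k:ℝ) * N^2 := by
    rw [hu, l1norm_restrict, hN, l2norm_sq, hu, sumsq_restrict]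
    have := l1_sq_le_card h T
    have hsq : 0 ≤ ∑ i ∈ T, h i ^2 := Finset.sum_nonneg fun i _ => sq_nonneg _
    nlinarith
  have hL1uN : l1norm u ≤ Real.sqrt k * N := by
    have h1 : l1norm u ≤ Real.sqrt ((k:ℝ) * N^2) := by
      rw [← Real.sqrt_sq hL1u0]
      exact Real.sqrt_le_sqrt hl1sq
    rwa [Real.sqrt_mul (by linarith : (0:ℝ) ≤ (k:ℝ)), Real.sqrt_sq hN0] at h1
  -- diag bound
  have hPsq : P^2 = ∑ r, A.mulVec u r * A.mulVec u r := by
    rw [hP, l2norm_sq]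
    exact Finset.sum_congr rfl fun r _ => sq _
  have hNsq : N^2 = ∑ i, u i ^ 2 := by rw [hN, l2norm_sq]
  have hdiag : |P^2 - N^2| ≤ δ * N^2 := by
    rw [hPsq, hNsq]
    refine (gram_diag_bound A hA hμ0 hcoh u).trans ?_
    have : (∑ i, |u i|)^2 - ∑ i, u i ^2 ≤ ((k:ℝ) - 1) * ∑ i, u i ^2 := by
      have h2 : (∑ i, |u i|)^2 ≤ (k:ℝ) * ∑ i, u i ^2 := by
        have := hl1sq; rw [hNsq] at this; exact this
      linarith
    calc μ * ((∑ i, |u i|)^2 - ∑ i, u i ^2) ≤ μ * (((k:ℝ)-1) * ∑ i, u i ^2) :=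
          mul_le_mul_of_nonneg_left this hμ0
      _ = δ * ∑ i, u i ^2 := by rw [hδdef]; ring
  have hupper : P ≤ Real.sqrt (1 + δ) * N := by
    have h1 : P^2 ≤ (1 + δ) * N^2 := by
      have := abs_le.mp hdiag; nlinarith
    have h2 : P ≤ Real.sqrt ((1+δ) * N^2) := by
      rw [← Real.sqrt_sq hP0]; exact Real.sqrt_le_sqrt h1
    rwa [Real.sqrt_mul (by linarith) _, Real.sqrt_sq hN0] at h2
  have hlower : (1 - δ) * N^2 ≤ P^2 := by
    have := abs_le.mp hdiag; nlinarith
  -- cross bound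
  have hdisj : ∀ i, u i = 0 ∨ v i = 0 := by
    intro i
    by_cases hi : i ∈ T
    · right; simp [hv, restrict, hi]
    · left; simp [hu, restrict, hi]
  have hcross : |∑ r, A.mulVec u r * A.mulVec v r| ≤ μ * (l1norm u * l1norm v) :=
    gram_cross_bound A hμ0 hcoh u v hdisj
  -- decomposition
  have hdecomp : ∑ r, A.mulVec u r * A.mulVec h r
      = P^2 + ∑ r, A.mulVec u r * A.mulVec v r := by
    rw [hPsq]
    have : A.mulVec h = A.mulVec u + A.mulVec v := by
      rw [← Matrix.mulVec_add, hu, hv, restrict_add_compl]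
    rw [this, ← Finset.sum_add_distrib]
    exact Finset.sum_congr rfl fun r _ => by simp [Pi.add_apply]; ring
  have hcs : ∑ r, A.mulVec u r * A.mulVec h r ≤ P * H := cs_sum _ _
  have hmain : P^2 ≤ P * H + μ * (l1norm u * l1norm v) := by
    have := abs_le.mp hcross
    linarith [hdecomp ▸ hcs]
  -- combine
  have hcomb : (1 - δ) * N^2 ≤ Real.sqrt (1+δ) * N * H + μ * (Real.sqrt k * N * l1norm v) := by
    have h1 : P * H ≤ Real.sqrt (1+δ) * N * H := mul_le_mul_of_nonneg_right hupper hH0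
    have h2 : μ * (l1norm u * l1norm v) ≤ μ * (Real.sqrt k * N * l1norm v) := by
      refine mul_le_mul_of_nonneg_left ?_ hμ0
      exact mul_le_mul_of_nonneg_right hL1uN hL1v0
    linarith
  rcases eq_or_lt_of_le hN0 with hN0' | hNpos
  · rw [← hN0']
    have hα1 : 0 ≤ alpha1 k μ := by
      rw [alpha1]; positivity
    have hα2 : 0 ≤ alpha2 k μ := by
      rw [alpha2]
      have : (0:ℝ) ≤ Real.sqrt k * μ := mul_nonneg (Real.sqrt_nonneg _) hμ0
      positivity
    positivity
  · rw [alpha1, alpha2, ← hδdef, div_mul_eq_mul_div, div_mul_eq_mul_div, ← add_div,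
      le_div_iff₀ h1δ]
    have hcancel : N * (N * (1 - δ)) ≤ N * (Real.sqrt (1+δ) * H + Real.sqrt k * μ * l1norm v) := by
      nlinarith [hcomb]
    have hfin := (mul_le_mul_iff_right₀ hNpos).mp hcancel
    linarith [hfin]

lemma restrict_mem {n : ℕ} {v : Fin n → ℝ} {T : Finset (Fin n)} {i : Fin n} (h : i ∈ T) :
    restrict v T i = v i := if_pos h

lemma restrict_not_mem {n : ℕ} {v : Fin n → ℝ} {T : Finset (Fin n)} {i : Fin n} (h : i ∉ T) :
    restrict v T i = 0 := if_neg h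

lemma l2norm_sub_comm {ι : Type*} [Fintype ι] (u v : ι → ℝ) :
    l2norm (u - v) = l2norm (v - u) := by
  rw [l2norm, l2norm]
  congr 1
  exact Finset.sum_congr rfl fun i _ => by simp only [Pi.sub_apply]; ring

lemma l1norm_restrict_le_sqrt {n : ℕ} (v : Fin n → ℝ) (T : Finset (Fin n)) {k : ℕ}
    (hT : (T.card : ℝ) ≤ k) :
    l1norm (restrict v T) ≤ Real.sqrt k * l2norm (restrict v T) := by
  have h0 : 0 ≤ l1norm (restrict v T) := l1norm_nonneg _
  have hsq : (l1norm (restrict v T))^2 ≤ (k:ℝ) * (l2norm (restrict v T))^2 := by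
    rw [l1norm_restrict, l2norm_sq, sumsq_restrict]
    have h1 := l1_sq_le_card v T
    have hge : (0:ℝ) ≤ ∑ i ∈ T, v i ^2 := Finset.sum_nonneg fun i _ => sq_nonneg _
    nlinarith
  have h1 : l1norm (restrict v T) ≤ Real.sqrt ((k:ℝ) * (l2norm (restrict v T))^2) := by
    rw [← Real.sqrt_sq h0]
    exact Real.sqrt_le_sqrt hsq
  rwa [Real.sqrt_mul (Nat.cast_nonneg k), Real.sqrt_sq (l2norm_nonneg _)] at h1

lemma final_arith (H e lam c : ℝ) (hc : 1 ≤ c) (he : 0 ≤ e) (hl : 0 < lam)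
    (hq : H^2 ≤ 2*lam*c*H + 4*lam*e) : H ≤ 2/c*e + 2*c*lam := by
  have hc0 : 0 < c := lt_of_lt_of_le one_pos hc
  by_contra hcon
  push_neg at hcon
  have h2 : 2*e + 2*c^2*lam < c*H := by
    have hm := mul_lt_mul_of_pos_left hcon hc0
    have hce : c * (2/c*e + 2*c*lam) = 2*e + 2*c^2*lam := by
      field_simp
    linarith [hce ▸ hm]
  nlinarith [hq, h2, sq_nonneg (c*H - 2*e - 2*c^2*lam), mul_pos hc0 hl, sq_nonneg e,
    mul_pos (mul_pos hc0 hc0) hl]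

set_option maxHeartbeats 1000000 in
theorem stmt_7 {m n : ℕ} (A : Matrix (Fin m) (Fin n) ℝ)
    (hA : ∀ j, l2norm (fun i => A i j) = 1)
    (k : ℕ) (hk : 2 ≤ k)
    (hμ : mutualCoherence A < 1 / (2 * (k : ℝ) - 1))
    (lam : ℝ) (hlam : 0 < lam)
    (x : Fin n → ℝ) (z : Fin m → ℝ) (b : Fin m → ℝ) (hb : b = A.mulVec x + z)
    (hz : l2norm z ≤ lam)
    (xs : Fin n → ℝ)
    (hmin : ∀ u : Fin n → ℝ,
      l1norm xs + 1 / (2 * lam) * l2norm (b - A.mulVec xs) ^ 2 ≤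
        l1norm u + 1 / (2 * lam) * l2norm (b - A.mulVec u) ^ 2)
    (xk : Fin n → ℝ) (hxk1 : sparse k xk)
    (hxk2 : ∀ y : Fin n → ℝ, sparse k y → l2norm (xk - x) ≤ l2norm (y - x)) :
    l2norm (A.mulVec (xs - x)) ≤
      2 / (Real.sqrt k * alpha1 k (mutualCoherence A) + 1) * l1norm (x - xk)
        + 2 * (Real.sqrt k * alpha1 k (mutualCoherence A) + 1) * lam := by
  classical
  set μ := mutualCoherence A with hμdef
  have hA' : ∀ j, ∑ r, A r j ^ 2 = 1 := by
    intro j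
    have h1 := hA j
    rw [l2norm] at h1
    exact Real.sqrt_eq_one.mp h1
  have hcol1 : ∀ i j : Fin n, |∑ r, A r i * A r j| ≤ 1 := by
    intro i j
    have hcs := Finset.sum_mul_sq_le_sq_mul_sq Finset.univ (fun r => A r i) (fun r => A r j)
    rw [hA' i, hA' j] at hcs
    nlinarith only [hcs, abs_nonneg (∑ r, A r i * A r j), sq_abs (∑ r, A r i * A r j)]
  have hμ0 : 0 ≤ μ := Real.iSup_nonneg fun p => abs_nonneg _
  have hbdd : BddAbove (Set.range fun p : {p : Fin n × Fin n // p.1 ≠ p.2} =>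
      |∑ r, A r p.1.1 * A r p.1.2|) := ⟨1, by rintro y ⟨p, rfl⟩; exact hcol1 _ _⟩
  have hcoh : ∀ i j : Fin n, i ≠ j → |∑ r, A r i * A r j| ≤ μ := by
    intro i j hij
    exact le_ciSup hbdd ⟨(i, j), hij⟩
  have hk1 : (1:ℝ) ≤ k := by exact_mod_cast Nat.one_le_of_lt hk
  have hk2 : (2:ℝ) ≤ k := by exact_mod_cast hk
  have h2k1 : (0:ℝ) < 2*(k:ℝ) - 1 := by linarith
  have hμ' : μ * (2*(k:ℝ)-1) < 1 := by
    have h1 := (lt_div_iff₀ h2k1).mp hμ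
    linarith only [h1]
  have hδ : ((k:ℝ)-1)*μ < 1 := by
    have hkμ : 0 ≤ (k:ℝ)*μ := mul_nonneg (by linarith only [hk1]) hμ0
    linarith only [hμ', hkμ]
  have h1δ : 0 < 1 - ((k:ℝ)-1)*μ := by linarith
  have hα10 : 0 < alpha1 k μ := by
    rw [alpha1]
    have hkm : 0 ≤ ((k:ℝ)-1)*μ := mul_nonneg (by linarith only [hk1]) hμ0
    exact div_pos (Real.sqrt_pos.mpr (by linarith only [hkm])) h1δ
  set c := Real.sqrt k * alpha1 k μ + 1 with hcdef
  have hsk0 : 0 ≤ Real.sqrt (k:ℝ) := Real.sqrt_nonneg _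
  have hc1 : 1 ≤ c := by
    have h1 : 0 ≤ Real.sqrt k * alpha1 k μ := mul_nonneg hsk0 hα10.le
    linarith
  have hc0 : 0 < c := lt_of_lt_of_le one_pos hc1
  have hkk : Real.sqrt (k:ℝ) * Real.sqrt (k:ℝ) = (k:ℝ) := Real.mul_self_sqrt (by linarith)
  have hska2 : Real.sqrt k * alpha2 k μ ≤ 1 := by
    rw [alpha2, mul_div_assoc', ← mul_assoc, hkk, div_le_one h1δ]
    linarith only [hμ']
  -- the support of xk
  set T := Finset.univ.filter (fun i => xk i ≠ 0) with hTdef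
  have hTcard : (T.card : ℝ) ≤ k := by exact_mod_cast hxk1
  have hxkoff : ∀ i, i ∉ T → xk i = 0 := by
    intro i hi
    by_contra hne
    exact hi (by simp [hTdef, hne])
  have hy : sparse k (restrict x T) := by
    have hsub : Finset.univ.filter (fun i => restrict x T i ≠ 0) ⊆ T := by
      intro i hi
      simp only [Finset.mem_filter, Finset.mem_univ, true_and] at hi
      by_contra hiT
      exact hi (restrict_not_mem hiT)
    exact le_trans (Finset.card_le_card hsub) hxk1
  have hle := hxk2 (restrict x T) hy
  have hsqle : ∑ i, (xk i - x i)^2 ≤ ∑ i, (restrict x T i - x i)^2 := by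
    have h1 := pow_le_pow_left₀ (l2norm_nonneg _) hle 2
    rw [l2norm_sq, l2norm_sq] at h1
    simpa [Pi.sub_apply] using h1
  have hTzero : ∀ i ∈ T, xk i = x i := by
    have hsplit1 : ∑ i, (xk i - x i)^2
        = ∑ i ∈ T, (xk i - x i)^2 + ∑ i ∈ Tᶜ, (x i)^2 := by
      rw [← Finset.sum_add_sum_compl T]
      congr 1
      refine Finset.sum_congr rfl fun i hi => ?_
      rw [hxkoff i (Finset.mem_compl.mp hi)]
      ring
    have hsplit2 : ∑ i, (restrict x T i - x i)^2 = ∑ i ∈ Tᶜ, (x i)^2 := by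
      rw [← Finset.sum_add_sum_compl T]
      have e1 : ∑ i ∈ T, (restrict x T i - x i)^2 = 0 :=
        Finset.sum_eq_zero fun i hi => by rw [restrict_mem hi]; ring
      have e2 : ∑ i ∈ Tᶜ, (restrict x T i - x i)^2 = ∑ i ∈ Tᶜ, (x i)^2 :=
        Finset.sum_congr rfl fun i hi => by
          rw [restrict_not_mem (Finset.mem_compl.mp hi)]; ring
      rw [e1, e2, zero_add]
    have hzero : ∑ i ∈ T, (xk i - x i)^2 ≤ 0 := by
      rw [hsplit1, hsplit2] at hsqle
      linarith only [hsqle]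
    intro i hi
    have hterm := (Finset.sum_eq_zero_iff_of_nonneg fun i _ => sq_nonneg (xk i - x i)).mp
      (le_antisymm hzero (Finset.sum_nonneg fun i _ => sq_nonneg _)) i hi
    have h2 : xk i - x i = 0 := by
      have := sq_eq_zero_iff.mp hterm
      exact this
    linarith [h2]
  have hxsub : x - xk = restrict x Tᶜ := by
    funext i
    by_cases hi : i ∈ T
    · have hic : i ∉ Tᶜ := by simp [hi]
      rw [Pi.sub_apply, restrict_not_mem hic, hTzero i hi]
      ring
    · rw [Pi.sub_apply, restrict_mem (Finset.mem_compl.mpr hi), hxkoff i hi]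
      ring
  set e := l1norm (x - xk) with hedef
  have he0 : 0 ≤ e := l1norm_nonneg _
  have heC : e = ∑ i ∈ Tᶜ, |x i| := by rw [hedef, hxsub, l1norm_restrict]
  set d := xs - x with hddef
  set H := l2norm (A.mulVec d) with hHdef
  have hH0 : 0 ≤ H := l2norm_nonneg _
  set R := l2norm (b - A.mulVec xs) with hRdef
  have hR0 : 0 ≤ R := l2norm_nonneg _
  have hHR : H ≤ lam + R := by
    have hAd : A.mulVec d = z + (A.mulVec xs - b) := by
      funext r
      rw [hddef, Matrix.mulVec_sub, hb]
      simp only [Pi.add_apply, Pi.sub_apply]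
      ring
    rw [hHdef, hAd]
    refine (l2norm_add_le z _).trans ?_
    have h1 : l2norm (A.mulVec xs - b) = R := by
      rw [hRdef, l2norm_sub_comm]
    linarith only [hz, h1]
  have hbx : b - A.mulVec x = z := by
    rw [hb]
    funext r
    simp
  have hmin' := hmin x
  rw [hbx] at hmin'
  have hz2 : l2norm z ^2 ≤ lam^2 := by
    have := mul_self_le_mul_self (l2norm_nonneg z) hz
    nlinarith only [this]
  -- l1 decomposition inequality
  have hST : l1norm x - l1norm xs
      ≤ l1norm (restrict d T) - l1norm (restrict d Tᶜ) + 2*e := by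
    have h1 : ∀ i ∈ T, |x i| - |d i| ≤ |xs i| := by
      intro i _
      have hxi : x i = xs i - d i := by
        rw [hddef]
        simp only [Pi.sub_apply]
        ring
      have habs : |x i| ≤ |xs i| + |d i| := by
        rw [hxi, sub_eq_add_neg]
        exact (abs_add_le _ _).trans_eq (by rw [abs_neg])
      linarith
    have h2 : ∀ i ∈ Tᶜ, |d i| - |x i| ≤ |xs i| := by
      intro i _
      have hdi : d i = xs i - x i := by
        rw [hddef]
        simp only [Pi.sub_apply]
      have habs : |d i| ≤ |xs i| + |x i| := by
        rw [hdi, sub_eq_add_neg]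
        exact (abs_add_le _ _).trans_eq (by rw [abs_neg])
      linarith
    have hs1 : ∑ i ∈ T, (|x i| - |d i|) ≤ ∑ i ∈ T, |xs i| := Finset.sum_le_sum h1
    have hs2 : ∑ i ∈ Tᶜ, (|d i| - |x i|) ≤ ∑ i ∈ Tᶜ, |xs i| := Finset.sum_le_sum h2
    have hxs : l1norm xs = ∑ i ∈ T, |xs i| + ∑ i ∈ Tᶜ, |xs i| :=
      (Finset.sum_add_sum_compl T _).symm
    have hx1 : l1norm x = ∑ i ∈ T, |x i| + ∑ i ∈ Tᶜ, |x i| :=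
      (Finset.sum_add_sum_compl T _).symm
    rw [Finset.sum_sub_distrib] at hs1 hs2
    rw [l1norm_restrict, l1norm_restrict, heC]
    linarith only [hs1, hs2, hxs, hx1]
  -- key coherence bound
  have hkey := key_bound A hA' hμ0 hcoh k hδ hk1 T hTcard d
  have hl1T := l1norm_restrict_le_sqrt d T hTcard
  have hSc0 : 0 ≤ l1norm (restrict d Tᶜ) := l1norm_nonneg _
  rw [← hHdef] at hkey
  clear_value μ c T e d H R
  have hSTH : l1norm (restrict d T) - l1norm (restrict d Tᶜ) ≤ (c - 1) * H := by
    have h1 : l1norm (restrict d T)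
        ≤ Real.sqrt k * (alpha1 k μ * H + alpha2 k μ * l1norm (restrict d Tᶜ)) :=
      hl1T.trans (mul_le_mul_of_nonneg_left hkey hsk0)
    have h2 : Real.sqrt k * alpha2 k μ * l1norm (restrict d Tᶜ)
        ≤ l1norm (restrict d Tᶜ) := by
      have := mul_le_mul_of_nonneg_right hska2 hSc0
      linarith only [this]
    have hc2 : c - 1 = Real.sqrt k * alpha1 k μ := by rw [hcdef]; ring
    rw [mul_add, ← mul_assoc, ← mul_assoc] at h1
    rw [hc2]
    linarith only [h1, h2]
  have hmain : 1/(2*lam) * R^2 ≤ (c-1)*H + 2*e + lam/2 := by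
    have hpos : (0:ℝ) ≤ 1/(2*lam) := by positivity
    have h1 : 1/(2*lam) * l2norm z ^2 ≤ lam/2 := by
      have h2 := mul_le_mul_of_nonneg_left hz2 hpos
      have heq : 1/(2*lam) * lam^2 = lam/2 := by field_simp
      linarith only [h2, heq]
    linarith only [hmin', hST, hSTH, h1]
  rcases le_or_gt H lam with hcase | hcase
  · have h1 : 0 ≤ 2/c * e := mul_nonneg (by positivity) he0
    have h2 : 0 ≤ lam * (c - 1) := mul_nonneg hlam.le (by linarith only [hc1])
    linarith only [hcase, h1, h2, hlam]
  · have hHl : 0 ≤ H - lam := by linarith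
    have hR2 : (H - lam)^2 ≤ R^2 := by
      have := mul_self_le_mul_self hHl (by linarith only [hHR] : H - lam ≤ R)
      nlinarith only [this]
    have hq : H^2 ≤ 2*lam*c*H + 4*lam*e := by
      have hpos : (0:ℝ) ≤ 1/(2*lam) := by positivity
      have h2 : 1/(2*lam)*(H-lam)^2 ≤ (c-1)*H + 2*e + lam/2 := by
        have h3 := mul_le_mul_of_nonneg_left hR2 hpos
        linarith only [h3, hmain]
      have h3 := mul_le_mul_of_nonneg_left h2 (by positivity : (0:ℝ) ≤ 2*lam)
      have heq : 2*lam*(1/(2*lam)*(H-lam)^2) = (H-lam)^2 := by field_simp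
      rw [heq] at h3
      nlinarith only [h3]
    exact final_arith H e lam c hc1 he0 hlam hq
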